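/- Calculus lemma (Li–Zhang, form (i)): let n ≥ 1, ν ∈ ℝ, u ∈ C¹(ℝⁿ). If for every x₀ ∈ ℝⁿ there exists 0 < λ_{x₀} < ∞ such that (λ_{x₀}/|x-x₀|)^{ν} u(x₀ + λ_{x₀}²(x-x₀)/|x-x₀|²) = u(x) for all x ≠ x₀, then there exist C ∈ ℝ, μ > 0, and x̄ ∈ ℝⁿ such that u(x) = C (μ/(1+μ²|x-x̄|²))^{ν/2} for all x. -/

import Mathlib

/-!
Letting `x → ∞` in the invariance about `p` gives `‖x - p‖ ^ ν * u x → λ_p ^ ν * u p`; since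
`‖x - p‖ / ‖x - q‖ → 1`, the quantity `A = λ_p ^ ν * u p` does not depend on `p`. If `A ≠ 0` and
`ν ≠ 0`, this determines `λ` from `u`, so `g = λ²` is differentiable, and substituting
`u = A λ^(-ν)` back into the invariance gives `λ(T_a x) = λ_a λ_x / ‖x - a‖` for the inversion
`T_a` about `a`. On a line this identity says that `(g (s + d) - d²) / d → g'(s)` as `d → ∞`, so
`g'(s) - 2s` does not depend on `s`: `g` is a quadratic with leading part `‖x‖²`, i.e.
`g x = ‖x - c‖² + b`, and `u = A g^(-ν/2)` is the bubble.
-/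

open Filter Topology

section

variable {E : Type*} [NormedAddCommGroup E] [NormedSpace ℝ E]

/-- For `g = λ²` this is `λ(T_a x) = λ(a) λ(x) / ‖x - a‖`, where `T_a` is the inversion in the
sphere of radius `λ(a)` about `a`. -/
def InversionCompatible (g : E → ℝ) : Prop :=
  ∀ a x, x ≠ a → g (a + (g a / ‖x - a‖ ^ 2) • (x - a)) * ‖x - a‖ ^ 2 = g a * g x

end

theorem tendsto_mul_sub_div_atTop (a b : ℝ) :
    Tendsto (fun t : ℝ => (a * t - b) / t) atTop (𝓝 a) := by
  have h := (tendsto_const_nhds (x := a)).sub ((tendsto_const_nhds (x := b)).div_atTop tendsto_id)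
  rw [sub_zero] at h
  refine h.congr' ?_
  filter_upwards [eventually_ne_atTop 0] with t ht
  rw [id, sub_div, mul_div_cancel_right₀ a ht]

namespace InversionCompatible

variable {φ : ℝ → ℝ}

theorem apply_add_div (hφ : InversionCompatible φ) (s : ℝ) {d : ℝ} (hd : d ≠ 0) :
    φ (s + φ s / d) * d ^ 2 = φ s * φ (s + d) := by
  have h := hφ s (s + d) (by simpa using hd)
  simp only [add_sub_cancel_left, Real.norm_eq_abs, sq_abs, smul_eq_mul] at h
  rwa [show φ s / d ^ 2 * d = φ s / d by field_simp] at h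

theorem tendsto_sub_sq_div_atTop (hφ : InversionCompatible φ) {s : ℝ} (hpos : 0 < φ s)
    (hdiff : DifferentiableAt ℝ φ s) :
    Tendsto (fun d => (φ (s + d) - d ^ 2) / d) atTop (𝓝 (deriv φ s)) := by
  have hpt : Tendsto (fun d : ℝ => s + φ s / d) atTop (𝓝[≠] s) := by
    refine tendsto_nhdsWithin_iff.mpr ⟨?_, ?_⟩
    · simpa using tendsto_const_nhds.add ((tendsto_const_nhds (x := φ s)).div_atTop tendsto_id)
    · filter_upwards [eventually_gt_atTop 0] with d hd
      simpa using (div_pos hpos hd).ne'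
  refine ((hasDerivAt_iff_tendsto_slope.mp hdiff.hasDerivAt).comp hpt).congr' ?_
  filter_upwards [eventually_gt_atTop 0] with d hd
  have h := hφ.apply_add_div s hd.ne'
  rw [Function.comp_apply, slope_def_field, add_sub_cancel_left,
    eq_div_of_mul_eq (pow_ne_zero 2 hd.ne') h]
  field_simp

/- `deriv φ s - 2 * s` is the slope at infinity of `φ t - t ^ 2`, whatever `s` is. -/
theorem deriv_eq_deriv_zero_add (hφ : InversionCompatible φ) (hpos : ∀ t, 0 < φ t)
    (hdiff : Differentiable ℝ φ) (s : ℝ) : deriv φ s = deriv φ 0 + 2 * s := by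
  have h0 : Tendsto (fun t => (φ t - t ^ 2) / t) atTop (𝓝 (deriv φ 0)) := by
    simpa using hφ.tendsto_sub_sq_div_atTop (hpos 0) (hdiff 0)
  have hs : Tendsto (fun t => (φ t - t ^ 2) / t) atTop (𝓝 (deriv φ s - 2 * s)) := by
    have hshift : Tendsto (fun t : ℝ => t - s) atTop atTop :=
      tendsto_atTop_add_const_right atTop (-s) tendsto_id
    have hd := (hφ.tendsto_sub_sq_div_atTop (hpos s) (hdiff s)).comp hshift
    have hrat : Tendsto (fun t : ℝ => (t - s) / t) atTop (𝓝 1) := by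
      simpa using tendsto_mul_sub_div_atTop 1 s
    have h := (hd.mul hrat).sub (tendsto_mul_sub_div_atTop (2 * s) (s ^ 2))
    rw [mul_one] at h
    refine h.congr' ?_
    filter_upwards [eventually_gt_atTop s, eventually_ne_atTop 0] with t hts ht0
    have : t - s ≠ 0 := sub_ne_zero.mpr hts.ne'
    simp only [Function.comp_apply, add_sub_cancel]
    field_simp
    ring
  linarith [tendsto_nhds_unique h0 hs]

theorem eq_quadratic (hφ : InversionCompatible φ) (hpos : ∀ t, 0 < φ t)
    (hdiff : Differentiable ℝ φ) (t : ℝ) : φ t = t ^ 2 + deriv φ 0 * t + φ 0 := by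
  have hderiv : ∀ x, HasDerivAt (fun t => φ t - (t ^ 2 + deriv φ 0 * t)) 0 x := by
    intro x
    have h := (hdiff x).hasDerivAt.fun_sub ((hasDerivAt_pow 2 x).fun_add
      ((hasDerivAt_id' x).const_mul (deriv φ 0)))
    rw [hφ.deriv_eq_deriv_zero_add hpos hdiff x] at h
    exact h.congr_deriv (by ring)
  have h := is_const_of_deriv_eq_zero (fun x => (hderiv x).differentiableAt)
    (fun x => (hderiv x).deriv) t 0
  linarith

end InversionCompatible

theorem exists_norm_sq_add_eq_norm_sub_sq {E : Type*} [NormedAddCommGroup E]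
    [InnerProductSpace ℝ E] [CompleteSpace E] (L : E →L[ℝ] ℝ) :
    ∃ c : E, ∀ x, ‖x‖ ^ 2 + L x = ‖x - c‖ ^ 2 - ‖c‖ ^ 2 := by
  refine ⟨(-2⁻¹ : ℝ) • (InnerProductSpace.toDual ℝ E).symm L, fun x => ?_⟩
  rw [norm_sub_sq_real, inner_smul_right, real_inner_comm, InnerProductSpace.toDual_symm_apply]
  ring

namespace InversionCompatible

variable {E : Type*} [NormedAddCommGroup E] [NormedSpace ℝ E] {g : E → ℝ}

theorem comp_smul_right (hg : InversionCompatible g) {v : E} (hv : ‖v‖ = 1) :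
    InversionCompatible (fun t : ℝ => g (t • v)) := by
  intro a x hxa
  have hv0 : v ≠ 0 := norm_ne_zero_iff.mp (by simp [hv])
  have h := hg (a • v) (x • v) fun h => hxa (smul_left_injective ℝ hv0 h)
  have hnorm : ‖x • v - a • v‖ = ‖x - a‖ := by rw [← sub_smul, norm_smul, hv, mul_one]
  rw [hnorm, ← sub_smul, smul_smul, ← add_smul] at h
  simpa using h

theorem eq_norm_sq_add_fderiv (hg : InversionCompatible g) (hpos : ∀ x, 0 < g x)
    (hdiff : Differentiable ℝ g) (w : E) : g w = ‖w‖ ^ 2 + fderiv ℝ g 0 w + g 0 := by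
  rcases eq_or_ne w 0 with rfl | hw
  · simp
  set v := ‖w‖⁻¹ • w
  have hv : ‖v‖ = 1 := norm_smul_inv_norm hw
  have hwv : ‖w‖ • v = w := smul_inv_smul₀ (norm_ne_zero_iff.mpr hw) w
  have hline : HasDerivAt (fun t : ℝ => g (t • v)) (fderiv ℝ g 0 v) 0 := by
    have h := (hdiff ((0 : ℝ) • v)).hasFDerivAt.comp_hasDerivAt (0 : ℝ)
      ((hasDerivAt_id (0 : ℝ)).smul_const v)
    rw [zero_smul, one_smul] at h
    exact h
  have h := (hg.comp_smul_right hv).eq_quadratic (fun t => hpos _)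
    (hdiff.comp (differentiable_id.smul_const v)) ‖w‖
  rw [hline.deriv, hwv, zero_smul] at h
  have hL : fderiv ℝ g 0 w = ‖w‖ * fderiv ℝ g 0 v := by
    rw [← smul_eq_mul, ← map_smul, hwv]
  rw [h, hL]
  ring

end InversionCompatible

theorem InversionCompatible.exists_eq_norm_sub_sq_add {E : Type*} [NormedAddCommGroup E]
    [InnerProductSpace ℝ E] [CompleteSpace E] {g : E → ℝ} (hg : InversionCompatible g)
    (hpos : ∀ x, 0 < g x) (hdiff : Differentiable ℝ g) :
    ∃ c : E, ∀ x, g x = ‖x - c‖ ^ 2 + g c := by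
  obtain ⟨c, hc⟩ := exists_norm_sq_add_eq_norm_sub_sq (fderiv ℝ g 0)
  refine ⟨c, fun x => ?_⟩
  rw [hg.eq_norm_sq_add_fderiv hpos hdiff x, hg.eq_norm_sq_add_fderiv hpos hdiff c, hc x, hc c,
    sub_self, norm_zero]
  ring

theorem eq_div_rpow_of_rpow_mul_eq {α : Type*} {ν A : ℝ} {u lam : α → ℝ}
    (hpos : ∀ x, 0 < lam x) (hconst : ∀ p, lam p ^ ν * u p = A) (p : α) :
    u p = A / lam p ^ ν :=
  eq_div_of_mul_eq (Real.rpow_pos_of_pos (hpos p) ν).ne' (by rw [mul_comm, hconst])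

section NormedGroup

variable {E : Type*} [SeminormedAddCommGroup E]

theorem tendsto_norm_sub_cobounded_atTop (x₀ : E) :
    Tendsto (fun x => ‖x - x₀‖) (Bornology.cobounded E) atTop :=
  tendsto_norm_atTop_iff_cobounded.2 (tendsto_sub_const_cobounded x₀)

theorem tendsto_norm_sub_div_norm_sub_cobounded (p q : E) :
    Tendsto (fun x => ‖x - p‖ / ‖x - q‖) (Bornology.cobounded E) (𝓝 1) := by
  have hr := tendsto_norm_sub_cobounded_atTop q
  have hsmall :
      Tendsto (fun x => (‖x - p‖ - ‖x - q‖) / ‖x - q‖) (Bornology.cobounded E) (𝓝 0) := by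
    refine squeeze_zero_norm' ?_ ((tendsto_const_nhds (x := ‖q - p‖)).div_atTop hr)
    filter_upwards [hr.eventually_gt_atTop 0] with x hx
    rw [norm_div, Real.norm_of_nonneg hx.le]
    gcongr
    simpa using abs_norm_sub_norm_le (x - p) (x - q)
  have h := (tendsto_const_nhds (x := (1 : ℝ))).add hsmall
  rw [add_zero] at h
  refine h.congr' ?_
  filter_upwards [hr.eventually_gt_atTop 0] with x hx
  field_simp
  ring

end NormedGroup

section Kelvin

variable {E : Type*} [NormedAddCommGroup E] [NormedSpace ℝ E] {ν A : ℝ} {u lam : E → ℝ}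

def IsKelvinInvariant (ν : ℝ) (u : E → ℝ) (x₀ : E) (ρ : ℝ) : Prop :=
  ∀ x, x ≠ x₀ → (ρ / ‖x - x₀‖) ^ ν * u (x₀ + (ρ ^ 2 / ‖x - x₀‖ ^ 2) • (x - x₀)) = u x

theorem IsKelvinInvariant.tendsto_cobounded {x₀ : E} {ρ : ℝ}
    (h : IsKelvinInvariant ν u x₀ ρ) (hρ : 0 < ρ) (hu : ContinuousAt u x₀) :
    Tendsto (fun x => ‖x - x₀‖ ^ ν * u x) (Bornology.cobounded E) (𝓝 (ρ ^ ν * u x₀)) := by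
  have hr := tendsto_norm_sub_cobounded_atTop x₀
  have hT : Tendsto (fun x => x₀ + (ρ ^ 2 / ‖x - x₀‖ ^ 2) • (x - x₀))
      (Bornology.cobounded E) (𝓝 x₀) := by
    rw [tendsto_iff_norm_sub_tendsto_zero]
    refine ((tendsto_const_nhds (x := ρ ^ 2)).div_atTop hr).congr' ?_
    filter_upwards [hr.eventually_gt_atTop 0] with x hx
    rw [add_sub_cancel_left, norm_smul, Real.norm_of_nonneg (by positivity)]
    field_simp
  refine ((hu.tendsto.comp hT).const_mul (ρ ^ ν)).congr' ?_
  filter_upwards [hr.eventually_gt_atTop 0] with x hx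
  rw [Function.comp_apply, ← h x (by simpa [sub_eq_zero] using hx.ne'),
    Real.div_rpow hρ.le hx.le]
  field_simp [(Real.rpow_pos_of_pos hx ν).ne']

theorem rpow_mul_eq_of_isKelvinInvariant [Nontrivial E] (hu : Continuous u)
    (hpos : ∀ x, 0 < lam x) (hlam : ∀ x₀, IsKelvinInvariant ν u x₀ (lam x₀)) (p q : E) :
    lam p ^ ν * u p = lam q ^ ν * u q := by
  have h := ((tendsto_norm_sub_div_norm_sub_cobounded p q).rpow_const (p := ν)
    (Or.inl one_ne_zero)).mul ((hlam q).tendsto_cobounded (hpos q) hu.continuousAt)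
  rw [Real.one_rpow, one_mul] at h
  refine tendsto_nhds_unique ((hlam p).tendsto_cobounded (hpos p) hu.continuousAt) (h.congr' ?_)
  filter_upwards [(tendsto_norm_sub_cobounded_atTop q).eventually_gt_atTop 0] with x hx
  rw [Real.div_rpow (norm_nonneg _) hx.le]
  field_simp [(Real.rpow_pos_of_pos hx ν).ne']

theorem inversionCompatible_sq_of_isKelvinInvariant (hν : ν ≠ 0) (hA : A ≠ 0)
    (hpos : ∀ x, 0 < lam x) (hlam : ∀ x₀, IsKelvinInvariant ν u x₀ (lam x₀))
    (hconst : ∀ p, lam p ^ ν * u p = A) : InversionCompatible (fun x => lam x ^ 2) := by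
  intro a x hxa
  have hr : 0 < ‖x - a‖ := norm_pos_iff.mpr (sub_ne_zero.mpr hxa)
  set T := a + (lam a ^ 2 / ‖x - a‖ ^ 2) • (x - a)
  have hu_eq := eq_div_rpow_of_rpow_mul_eq hpos hconst
  have hT : lam T = lam a * lam x / ‖x - a‖ := by
    rw [← Real.rpow_left_inj (hpos T).le (div_pos (mul_pos (hpos a) (hpos x)) hr).le hν]
    have h := hlam a x hxa
    rw [hu_eq, hu_eq, Real.div_rpow (hpos a).le hr.le] at h
    rw [mul_div_right_comm, Real.mul_rpow (div_pos (hpos a) hr).le (hpos x).le,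
      Real.div_rpow (hpos a).le hr.le]
    field_simp [(Real.rpow_pos_of_pos (hpos T) ν).ne', (Real.rpow_pos_of_pos (hpos x) ν).ne',
      (Real.rpow_pos_of_pos hr ν).ne'] at h
    rw [div_eq_iff (Real.rpow_pos_of_pos (hpos T) ν).ne'] at h
    field_simp
    linarith
  show lam T ^ 2 * ‖x - a‖ ^ 2 = lam a ^ 2 * lam x ^ 2
  rw [hT]
  field_simp

theorem differentiable_sq_of_rpow_mul_eq (hν : ν ≠ 0) (hA : A ≠ 0) (hpos : ∀ x, 0 < lam x)
    (hconst : ∀ p, lam p ^ ν * u p = A) (hu : Differentiable ℝ u) :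
    Differentiable ℝ (fun x => lam x ^ 2) := by
  have hu0 : ∀ x, u x ≠ 0 := fun x hx => hA (by rw [← hconst x, hx, mul_zero])
  have hlam : ∀ x, lam x ^ ν = A * (u x)⁻¹ := fun x => by
    rw [← div_eq_mul_inv, ← hconst x, mul_div_cancel_right₀ _ (hu0 x)]
  have heq : (fun x => lam x ^ 2) = fun x => (A * (u x)⁻¹) ^ (2 / ν) := by
    funext x
    rw [← hlam, ← Real.rpow_mul (hpos x).le, mul_div_cancel₀ _ hν, Real.rpow_two]
  rw [heq]
  exact fun x => (((hu x).inv (hu0 x)).const_mul A).rpow_const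
    (Or.inl (mul_ne_zero hA (inv_ne_zero (hu0 x))))

end Kelvin

theorem exists_eq_div_norm_sub_sq_add_rpow {E : Type*} [NormedAddCommGroup E]
    [InnerProductSpace ℝ E] [CompleteSpace E] {ν A : ℝ} {u lam : E → ℝ} (hu : Differentiable ℝ u)
    (hpos : ∀ x, 0 < lam x) (hlam : ∀ x₀, IsKelvinInvariant ν u x₀ (lam x₀))
    (hconst : ∀ p, lam p ^ ν * u p = A) :
    ∃ (c : E) (b : ℝ), 0 < b ∧ ∀ x, u x = A / (‖x - c‖ ^ 2 + b) ^ (ν / 2) := by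
  have hu_eq := eq_div_rpow_of_rpow_mul_eq hpos hconst
  rcases eq_or_ne ν 0 with rfl | hν
  · exact ⟨0, 1, one_pos, fun x => by simp [hu_eq]⟩
  rcases eq_or_ne A 0 with rfl | hA
  · exact ⟨0, 1, one_pos, fun x => by simp [hu_eq]⟩
  obtain ⟨c, hc⟩ := (inversionCompatible_sq_of_isKelvinInvariant hν hA hpos hlam hconst)
    |>.exists_eq_norm_sub_sq_add (fun x => pow_pos (hpos x) 2)
      (differentiable_sq_of_rpow_mul_eq hν hA hpos hconst hu)
  refine ⟨c, lam c ^ 2, pow_pos (hpos c) 2, fun x => ?_⟩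
  rw [← hc, hu_eq, ← Real.rpow_two, ← Real.rpow_mul (hpos x).le]
  ring_nf

theorem exists_div_sq_add_rpow_eq (A ν : ℝ) {b : ℝ} (hb : 0 < b) :
    ∃ C μ : ℝ, 0 < μ ∧
      ∀ r : ℝ, A / (r ^ 2 + b) ^ (ν / 2) = C * (μ / (1 + μ ^ 2 * r ^ 2)) ^ (ν / 2) := by
  have hs : 0 < √b := Real.sqrt_pos.mpr hb
  refine ⟨A / √b ^ (ν / 2), (√b)⁻¹, inv_pos.mpr hs, fun r => ?_⟩
  have hμ : (√b)⁻¹ / (1 + (√b)⁻¹ ^ 2 * r ^ 2) = √b / (r ^ 2 + b) := by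
    field_simp
    rw [Real.sq_sqrt hb.le]
    ring
  rw [hμ, Real.div_rpow hs.le (by positivity)]
  field_simp [(Real.rpow_pos_of_pos hs (ν / 2)).ne']

theorem stmt_16 (n : ℕ) (hn : 1 ≤ n) (ν : ℝ)
    (u : EuclideanSpace ℝ (Fin n) → ℝ) (hreg : ContDiff ℝ 1 u)
    (hinv : ∀ x₀ : EuclideanSpace ℝ (Fin n), ∃ lam : ℝ, 0 < lam ∧
      ∀ x, x ≠ x₀ →
        (lam / ‖x - x₀‖) ^ ν * u (x₀ + (lam ^ 2 / ‖x - x₀‖ ^ 2) • (x - x₀)) = u x) :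
    ∃ (C μ : ℝ) (xb : EuclideanSpace ℝ (Fin n)), 0 < μ ∧
      ∀ x, u x = C * (μ / (1 + μ ^ 2 * ‖x - xb‖ ^ 2)) ^ (ν / 2) := by
  have : NeZero n := ⟨by omega⟩
  choose lam hpos hlam using hinv
  obtain ⟨c, b, hb, hu⟩ := exists_eq_div_norm_sub_sq_add_rpow (hreg.differentiable one_ne_zero)
    hpos hlam fun p => rpow_mul_eq_of_isKelvinInvariant hreg.continuous hpos hlam p 0
  obtain ⟨C, μ, hμ, hC⟩ := exists_div_sq_add_rpow_eq (lam 0 ^ ν * u 0) ν hb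
  exact ⟨C, μ, c, hμ, fun x => (hu x).trans (hC _)⟩
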